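/- arXiv:2102.06861 — 2 statements merged into one kernel-verified Lean document; each statement's English description precedes it below -/
import Mathlib

section
/- There is a universal constant c₀ > 0 such that for every smooth function f : ℝ² → ℝ which is 2-periodic in each variable, one has ‖f‖_{L^∞}² ≤ c₀ ( ‖f‖₀ ‖(f,∂₁f)‖₀ + ‖f‖₀^{1/2} ‖(f,∂₁f)‖₀^{1/2} ‖∂₂f‖₀^{1/2} ‖∂₂(f,∂₁f)‖₀^{1/2} ), where the L^∞ norm is also taken over the periodic cell (-1,1)². -/
open MeasureTheory

noncomputable section

/-- A point of the plane `ℝ²`. -/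
abbrev Pt := ℝ × ℝ

/-- The periodic cell `(-1,1)²`. -/
def cell : Set Pt := Set.Ioo (-1 : ℝ) 1 ×ˢ Set.Ioo (-1 : ℝ) 1

/-- `f` is 2-periodic in each variable. -/
def Periodic2 (f : Pt → ℝ) : Prop :=
  (∀ y : Pt, f (y.1 + 2, y.2) = f y) ∧ ∀ y : Pt, f (y.1, y.2 + 2) = f y

/-- Partial derivative in the first variable. -/
def p1 (f : Pt → ℝ) : Pt → ℝ := fun y => fderiv ℝ f y (1, 0)

/-- Partial derivative in the second variable. -/
def p2 (f : Pt → ℝ) : Pt → ℝ := fun y => fderiv ℝ f y (0, 1)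

/-- Iterated partial derivative `∂₁^a ∂₂^b f`. -/
def pd (a b : ℕ) (f : Pt → ℝ) : Pt → ℝ := p1^[a] (p2^[b] f)

/-- Square of the `L²((-1,1)²)` norm. -/
def L2sq (f : Pt → ℝ) : ℝ := ∫ y in cell, (f y) ^ 2

/-- The `L²((-1,1)²)` norm `‖f‖₀`. -/
def L2 (f : Pt → ℝ) : ℝ := Real.sqrt (L2sq f)

/-- Square of the Sobolev norm `‖f‖_i² = Σ_{|α| ≤ i} ‖∂^α f‖₀²`. -/
def sobSq (i : ℕ) (f : Pt → ℝ) : ℝ :=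
  ∑ a ∈ Finset.range (i + 1), ∑ b ∈ Finset.range (i + 1 - a), L2sq (pd a b f)

/-- The Sobolev norm `‖f‖_i`. -/
def sob (i : ℕ) (f : Pt → ℝ) : ℝ := Real.sqrt (sobSq i f)

/-- Square of the homogeneous seminorm `‖∇^i f‖₀² = Σ_{|α| = i} ‖∂^α f‖₀²`. -/
def gradSq (i : ℕ) (f : Pt → ℝ) : ℝ :=
  ∑ a ∈ Finset.range (i + 1), L2sq (pd a (i - a) f)

/-- Norm of a pair of functions: `‖(f,g)‖₀ = √(‖f‖₀² + ‖g‖₀²)`. -/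
def pairN (f g : Pt → ℝ) : ℝ := Real.sqrt (L2sq f + L2sq g)

/-! Integrating `(g²)' = 2gg'` over a period of a `T`-periodic `C¹` function `g` and averaging
the starting point gives the one-dimensional Agmon inequality
`g(x)² ≤ (1/T)∫g² + 2∫|gg'|`. Applied along horizontal lines, integrated over the second variable
and combined with Cauchy–Schwarz on the cell, it bounds the square integral of `f` over every
vertical line by `(5/2)‖f‖₀‖(f,∂₁f)‖₀`, and likewise for `∂₂f` since `∂₁∂₂f = ∂₂∂₁f`.
Applying the one-dimensional inequality once more along the vertical line through `y` and
Cauchy–Schwarz on that line then gives the theorem with `c₀ = 5`. -/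

theorem integral_abs_mul_le_sqrt_mul_sqrt {α : Type*} [MeasurableSpace α] {μ : Measure α}
    {f g : α → ℝ} (hf : MemLp f 2 μ) (hg : MemLp g 2 μ) :
    ∫ a, |f a * g a| ∂μ ≤ √(∫ a, f a ^ 2 ∂μ) * √(∫ a, g a ^ 2 ∂μ) := by
  have h := integral_mul_norm_le_Lp_mul_Lq Real.HolderConjugate.two_two
    (by simpa using hf) (by simpa using hg)
  simpa [Real.sqrt_eq_rpow, abs_mul, Real.rpow_two, sq_abs] using h

theorem Continuous.memLp_two_restrict_of_subset_isCompact {X : Type*} [TopologicalSpace X]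
    [MeasurableSpace X] [OpensMeasurableSpace X] [T2Space X] {μ : Measure X}
    [IsFiniteMeasureOnCompacts μ] {f : X → ℝ} (hf : Continuous f) {K s : Set X}
    (hK : IsCompact K) (hs : s ⊆ K) : MemLp f 2 (μ.restrict s) :=
  (memLp_two_iff_integrable_sq hf.aestronglyMeasurable).2
    (((hf.pow 2).continuousOn.integrableOn_compact hK).mono_set hs)

theorem intervalIntegral_abs_mul_le_sqrt_mul_sqrt {f g : ℝ → ℝ} (hf : Continuous f)
    (hg : Continuous g) {a b : ℝ} (hab : a ≤ b) :
    ∫ t in a..b, |f t * g t| ≤ √(∫ t in a..b, f t ^ 2) * √(∫ t in a..b, g t ^ 2) := by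
  simp only [intervalIntegral.integral_of_le hab]
  exact integral_abs_mul_le_sqrt_mul_sqrt
    (hf.memLp_two_restrict_of_subset_isCompact isCompact_Icc Set.Ioc_subset_Icc_self)
    (hg.memLp_two_restrict_of_subset_isCompact isCompact_Icc Set.Ioc_subset_Icc_self)

theorem sq_sub_sq_le_two_mul_integral_abs_mul_deriv {g : ℝ → ℝ} (hg : ContDiff ℝ 1 g) {t x : ℝ}
    (htx : t ≤ x) : g x ^ 2 - g t ^ 2 ≤ 2 * ∫ s in t..x, |g s * deriv g s| := by
  have hcont : Continuous fun s => g s * deriv g s :=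
    hg.continuous.mul (hg.continuous_deriv le_rfl)
  have hd : ∀ s, HasDerivAt (fun s => g s ^ 2) (2 * (g s * deriv g s)) s := fun s => by
    simpa [mul_comm, mul_assoc, mul_left_comm] using
      ((hg.differentiable one_ne_zero s).hasDerivAt.fun_pow 2)
  rw [← intervalIntegral.integral_eq_sub_of_hasDerivAt (fun s _ => hd s)
    ((continuous_const.mul hcont).intervalIntegrable _ _), ← intervalIntegral.integral_const_mul]
  exact intervalIntegral.integral_mono_on htx ((continuous_const.mul hcont).intervalIntegrable _ _)
    ((continuous_const.mul hcont.abs).intervalIntegrable _ _)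
    fun s _ => by linarith [le_abs_self (g s * deriv g s)]

theorem sq_le_of_periodic {g : ℝ → ℝ} (hg : ContDiff ℝ 1 g) {T : ℝ} (hT : 0 < T)
    (hper : Function.Periodic g T) (a x : ℝ) :
    g x ^ 2 ≤ (∫ t in a..a + T, g t ^ 2) / T + 2 * ∫ t in a..a + T, |g t * deriv g t| := by
  have hgc : Continuous g := hg.continuous
  have hper' : Function.Periodic (deriv g) T := fun t => by
    rw [← deriv_comp_add_const, funext hper]
  have hcont : Continuous fun s => |g s * deriv g s| :=
    (hgc.mul (hg.continuous_deriv le_rfl)).abs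
  set I := ∫ t in a..a + T, |g t * deriv g t|
  have hI : ∫ s in x - T..x, |g s * deriv g s| = I := by
    have hp : Function.Periodic (fun s => |g s * deriv g s|) T := fun s => by
      simp only [hper s, hper' s]
    simpa only [sub_add_cancel] using hp.intervalIntegral_add_eq (x - T) a
  have hsq : ∫ s in x - T..x, g s ^ 2 = ∫ t in a..a + T, g t ^ 2 := by
    have hp : Function.Periodic (fun s => g s ^ 2) T := fun s => by simp only [hper s]
    simpa only [sub_add_cancel] using hp.intervalIntegral_add_eq (x - T) a
  have hpt : ∀ t ∈ Set.Icc (x - T) x, g x ^ 2 ≤ g t ^ 2 + 2 * I := fun t ht => by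
    have hmono : ∫ s in t..x, |g s * deriv g s| ≤ ∫ s in x - T..x, |g s * deriv g s| :=
      intervalIntegral.integral_mono_interval ht.1 ht.2 le_rfl
        (Filter.Eventually.of_forall fun s => abs_nonneg _) (hcont.intervalIntegrable _ _)
    linarith [sq_sub_sq_le_two_mul_integral_abs_mul_deriv hg ht.2]
  have hint : ∫ t in x - T..x, g x ^ 2 ≤ ∫ t in x - T..x, (g t ^ 2 + 2 * I) :=
    intervalIntegral.integral_mono_on (by linarith) intervalIntegrable_const
      ((by fun_prop : Continuous fun t => g t ^ 2 + 2 * I).intervalIntegrable _ _) hpt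
  rw [intervalIntegral.integral_add (f := fun t => g t ^ 2) ((hgc.pow 2).intervalIntegrable _ _)
      intervalIntegrable_const,
    hsq, intervalIntegral.integral_const, intervalIntegral.integral_const] at hint
  simp only [sub_sub_cancel, smul_eq_mul] at hint
  rw [div_add' _ _ _ hT.ne', le_div_iff₀ hT]
  linarith

theorem fderiv_eq_of_add_periodic {E F : Type*} [NormedAddCommGroup E] [NormedSpace ℝ E]
    [NormedAddCommGroup F] [NormedSpace ℝ F] {f : E → F} {c : E} (hf : ∀ z, f (z + c) = f z)
    (z : E) : fderiv ℝ f (z + c) = fderiv ℝ f z := by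
  rw [← fderiv_comp_add_right, funext hf]

theorem p2_fst_add_two {f : Pt → ℝ} (hper : ∀ y : Pt, f (y.1 + 2, y.2) = f y) (y : Pt) :
    p2 f (y.1 + 2, y.2) = p2 f y := by
  have hshift : ∀ z : Pt, f (z + (2, 0)) = f z := fun ⟨a, b⟩ => by simpa using hper (a, b)
  have := fderiv_eq_of_add_periodic hshift y
  simp only [Prod.add_def, add_zero] at this
  simp only [p2, this]

theorem contDiff_p1 {n : WithTop ℕ∞} {f : Pt → ℝ} (hf : ContDiff ℝ (n + 1) f) :
    ContDiff ℝ n (p1 f) :=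
  (hf.fderiv_right le_rfl).clm_apply contDiff_const

theorem contDiff_p2 {n : WithTop ℕ∞} {f : Pt → ℝ} (hf : ContDiff ℝ (n + 1) f) :
    ContDiff ℝ n (p2 f) :=
  (hf.fderiv_right le_rfl).clm_apply contDiff_const

theorem deriv_slice_fst {f : Pt → ℝ} (hf : Differentiable ℝ f) (s t : ℝ) :
    deriv (fun x => f (x, t)) s = p1 f (s, t) := by
  have := (hf (s, t)).hasFDerivAt.comp_hasDerivAt s
    ((hasDerivAt_id s).prodMk (hasDerivAt_const s t))
  simpa [p1, Function.comp_def] using this.deriv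

theorem deriv_slice_snd {f : Pt → ℝ} (hf : Differentiable ℝ f) (s t : ℝ) :
    deriv (fun y => f (s, y)) t = p2 f (s, t) := by
  have := (hf (s, t)).hasFDerivAt.comp_hasDerivAt t
    ((hasDerivAt_const t s).prodMk (hasDerivAt_id t))
  simpa [p2, Function.comp_def] using this.deriv

theorem p1_p2_comm {f : Pt → ℝ} (hf : ContDiff ℝ 2 f) : p1 (p2 f) = p2 (p1 f) := by
  funext y
  have hd : DifferentiableAt ℝ (fderiv ℝ f) y :=
    (hf.fderiv_right (m := 1) le_rfl).differentiable one_ne_zero y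
  change fderiv ℝ (fun z => fderiv ℝ f z (0, 1)) y (1, 0)
    = fderiv ℝ (fun z => fderiv ℝ f z (1, 0)) y (0, 1)
  rw [fderiv_clm_apply hd (differentiableAt_const _),
    fderiv_clm_apply hd (differentiableAt_const _)]
  simpa using (hf.contDiffAt (x := y)).isSymmSndFDerivAt (by simp) (1, 0) (0, 1)

theorem setIntegral_cell_eq_intervalIntegral {h : Pt → ℝ} (hh : Continuous h) :
    ∫ z in cell, h z = ∫ t in (-1:ℝ)..1, ∫ s in (-1:ℝ)..1, h (s, t) := by
  have hint : IntegrableOn h cell ((volume : Measure ℝ).prod volume) := by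
    rw [← Measure.volume_eq_prod]
    exact (hh.continuousOn.integrableOn_compact (isCompact_Icc.prod isCompact_Icc)).mono_set
      (Set.prod_mono Set.Ioo_subset_Icc_self Set.Ioo_subset_Icc_self)
  rw [cell, Measure.volume_eq_prod, setIntegral_prod _ hint,
    integral_integral_swap (by rw [Measure.prod_restrict]; exact hint)]
  simp only [intervalIntegral.integral_of_le (show (-1:ℝ) ≤ 1 by norm_num),
    integral_Ioc_eq_integral_Ioo]

theorem L2sq_nonneg (f : Pt → ℝ) : 0 ≤ L2sq f :=
  setIntegral_nonneg (measurableSet_Ioo.prod measurableSet_Ioo) fun _ _ => sq_nonneg _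

theorem integral_sq_slice_le {f : Pt → ℝ} (hf : ContDiff ℝ 1 f)
    (hper : ∀ y : Pt, f (y.1 + 2, y.2) = f y) (x : ℝ) :
    ∫ t in (-1:ℝ)..1, f (x, t) ^ 2 ≤ L2sq f / 2 + 2 * (L2 f * L2 (p1 f)) := by
  have hc : Continuous f := hf.continuous
  have hc1 : Continuous (p1 f) := (contDiff_p1 (n := 0) hf).continuous
  have hslice : ∀ t, f (x, t) ^ 2 ≤ (∫ s in (-1:ℝ)..1, f (s, t) ^ 2) / 2
      + 2 * ∫ s in (-1:ℝ)..1, |f (s, t) * p1 f (s, t)| := fun t => by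
    have := sq_le_of_periodic (g := fun s => f (s, t))
      (hf.comp (contDiff_id.prodMk contDiff_const)) two_pos (fun s => hper (s, t)) (-1) x
    norm_num only [deriv_slice_fst (hf.differentiable one_ne_zero)] at this
    exact this
  have hu : Continuous fun t => ∫ s in (-1:ℝ)..1, f (s, t) ^ 2 :=
    intervalIntegral.continuous_parametric_intervalIntegral_of_continuous' (by fun_prop) _ _
  have hv : Continuous fun t => 2 * ∫ s in (-1:ℝ)..1, |f (s, t) * p1 f (s, t)| :=
    continuous_const.mul
      (intervalIntegral.continuous_parametric_intervalIntegral_of_continuous' (by fun_prop) _ _)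
  have hK : IsCompact (Set.Icc (-1:ℝ) 1 ×ˢ Set.Icc (-1:ℝ) 1) := isCompact_Icc.prod isCompact_Icc
  have hsub : cell ⊆ Set.Icc (-1:ℝ) 1 ×ˢ Set.Icc (-1:ℝ) 1 :=
    Set.prod_mono Set.Ioo_subset_Icc_self Set.Ioo_subset_Icc_self
  calc ∫ t in (-1:ℝ)..1, f (x, t) ^ 2
      ≤ ∫ t in (-1:ℝ)..1, ((∫ s in (-1:ℝ)..1, f (s, t) ^ 2) / 2
          + 2 * ∫ s in (-1:ℝ)..1, |f (s, t) * p1 f (s, t)|) :=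
        intervalIntegral.integral_mono_on (by norm_num)
          ((by fun_prop : Continuous fun t => f (x, t) ^ 2).intervalIntegrable _ _)
          (((hu.div_const 2).add hv).intervalIntegrable _ _) fun t _ => hslice t
    _ = L2sq f / 2 + 2 * ∫ z in cell, |f z * p1 f z| := by
        rw [intervalIntegral.integral_add ((hu.div_const 2).intervalIntegrable _ _)
          (hv.intervalIntegrable _ _), intervalIntegral.integral_div,
          intervalIntegral.integral_const_mul, L2sq,
          setIntegral_cell_eq_intervalIntegral (h := fun z => f z ^ 2) (by fun_prop),
          setIntegral_cell_eq_intervalIntegral (h := fun z => |f z * p1 f z|) (by fun_prop)]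
    _ ≤ L2sq f / 2 + 2 * (L2 f * L2 (p1 f)) := by
        gcongr
        exact integral_abs_mul_le_sqrt_mul_sqrt (hc.memLp_two_restrict_of_subset_isCompact hK hsub)
          (hc1.memLp_two_restrict_of_subset_isCompact hK hsub)

theorem L2sq_div_two_add_le (f g : Pt → ℝ) :
    L2sq f / 2 + 2 * (L2 f * L2 g) ≤ 5 / 2 * (L2 f * pairN f g) := by
  have hf : L2 f ≤ pairN f g := Real.sqrt_le_sqrt (by linarith [L2sq_nonneg g])
  have hg : L2 g ≤ pairN f g := Real.sqrt_le_sqrt (by linarith [L2sq_nonneg f])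
  have h0 : 0 ≤ L2 f := Real.sqrt_nonneg _
  rw [show L2sq f = L2 f * L2 f from (Real.mul_self_sqrt (L2sq_nonneg f)).symm]
  nlinarith [mul_le_mul_of_nonneg_left hf h0, mul_le_mul_of_nonneg_left hg h0]

theorem sq_le_integral_sq_vertical_slice {f : Pt → ℝ} (hf : ContDiff ℝ 1 f)
    (hper : ∀ y : Pt, f (y.1, y.2 + 2) = f y) (y : Pt) :
    f y ^ 2 ≤ (∫ t in (-1:ℝ)..1, f (y.1, t) ^ 2) / 2
      + 2 * (√(∫ t in (-1:ℝ)..1, f (y.1, t) ^ 2) * √(∫ t in (-1:ℝ)..1, p2 f (y.1, t) ^ 2)) := by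
  have hy := sq_le_of_periodic (g := fun t => f (y.1, t))
    (hf.comp (contDiff_const.prodMk contDiff_id)) two_pos (fun t => hper (y.1, t)) (-1) y.2
  norm_num only [deriv_slice_snd (hf.differentiable one_ne_zero)] at hy
  have hcs := intervalIntegral_abs_mul_le_sqrt_mul_sqrt (f := fun t => f (y.1, t))
    (g := fun t => p2 f (y.1, t)) (by fun_prop)
    ((contDiff_p2 (n := 0) hf).continuous.comp (by fun_prop)) (by norm_num : (-1:ℝ) ≤ 1)
  linarith

theorem half_add_two_mul_sqrt_mul_sqrt_le {Y Y' P Q : ℝ} (hY : Y ≤ 5 / 2 * P)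
    (hY' : Y' ≤ 5 / 2 * Q) (hP : 0 ≤ P) : Y / 2 + 2 * (√Y * √Y') ≤ 5 * (P + √P * √Q) := by
  have h52 : √(5 / 2 : ℝ) * √(5 / 2) = 5 / 2 := Real.mul_self_sqrt (by norm_num)
  have hsqrt : √Y * √Y' ≤ √(5 / 2 * P) * √(5 / 2 * Q) := by gcongr
  have hprod : √(5 / 2 * P) * √(5 / 2 * Q) = 5 / 2 * (√P * √Q) := by
    rw [Real.sqrt_mul (by norm_num), Real.sqrt_mul (by norm_num)]
    linear_combination (√P * √Q) * h52
  linarith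

/-- interpolation inequality: there is a universal constant `c₀ > 0`
such that every smooth 2-periodic function `f` satisfies, on the periodic cell,
`‖f‖_{L^∞}² ≤ c₀ (‖f‖₀‖(f,∂₁f)‖₀ + ‖f‖₀^{1/2}‖(f,∂₁f)‖₀^{1/2}‖∂₂f‖₀^{1/2}‖∂₂(f,∂₁f)‖₀^{1/2})`. -/
theorem statement2 :
    ∃ c₀ : ℝ, 0 < c₀ ∧
      ∀ f : Pt → ℝ, ContDiff ℝ (⊤ : ℕ∞) f → Periodic2 f →
        ∀ y ∈ cell, (f y) ^ 2 ≤
          c₀ * (L2 f * pairN f (p1 f) +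
            Real.sqrt (L2 f) * Real.sqrt (pairN f (p1 f)) *
              Real.sqrt (L2 (p2 f)) * Real.sqrt (pairN (p2 f) (p2 (p1 f)))) := by
  refine ⟨5, by norm_num, fun f hf hper y _ => ?_⟩
  have hf1 : ContDiff ℝ 1 f := hf.of_le (WithTop.coe_le_coe.2 le_top)
  have hf2 : ContDiff ℝ 2 f := hf.of_le (WithTop.coe_le_coe.2 le_top)
  have hY := (integral_sq_slice_le hf1 hper.1 y.1).trans (L2sq_div_two_add_le f (p1 f))
  have hY' := (integral_sq_slice_le (contDiff_p2 (n := 1) hf2) (p2_fst_add_two hper.1) y.1).trans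
    (L2sq_div_two_add_le (p2 f) (p1 (p2 f)))
  rw [p1_p2_comm hf2] at hY'
  have ha : 0 ≤ L2 f := Real.sqrt_nonneg _
  have hA : 0 ≤ pairN f (p1 f) := Real.sqrt_nonneg _
  have hb : 0 ≤ L2 (p2 f) := Real.sqrt_nonneg _
  have hbound := half_add_two_mul_sqrt_mul_sqrt_le hY hY' (mul_nonneg ha hA)
  rw [Real.sqrt_mul ha, Real.sqrt_mul hb] at hbound
  refine (sq_le_integral_sq_vertical_slice hf1 hper.2 y).trans (hbound.trans_eq ?_)
  ring
end
end

section
/- Let I ⊂ ℝ be an open interval containing 0, ζ : ℝ² × I → ℝ² be C² with det ∇ζ(·,t) = 1 for all t ∈ I, set u := ∂_t ζ and 𝒜 := (∇ζ)^{-T}. Let B : ℝ² × I → ℝ² be C¹ and satisfy the induction equation ∂_t B_i = Σ_{j,k} B_j 𝒜_{jk} ∂_k u_i (i.e. B_t = B·∇_𝒜 u). Then the vector field 𝒜ᵀB is independent of time: for every (y,t), Σ_j 𝒜_{jl}(y,t) B_j(y,t) = Σ_j 𝒜_{jl}(y,0) B_j(y,0) for l = 1,2; equivalently B(y,t) = ∇ζ(y,t)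 (𝒜(y,0))ᵀ B(y,0). -/
open MeasureTheory

noncomputable section

/-- A space-time point `(y, t) ∈ ℝ² × ℝ`. -/
abbrev PtT := (ℝ × ℝ) × ℝ

/-- Spatial partial derivative in the first variable. -/
def sp1 (g : PtT → ℝ) : PtT → ℝ := fun p => fderiv ℝ (fun y : Pt => g (y, p.2)) p.1 (1, 0)

/-- Spatial partial derivative in the second variable. -/
def sp2 (g : PtT → ℝ) : PtT → ℝ := fun p => fderiv ℝ (fun y : Pt => g (y, p.2)) p.1 (0, 1)

/-- Time derivative. -/
def dt (g : PtT → ℝ) : PtT → ℝ := fun p => deriv (fun t => g (p.1, t)) p.2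

/-- First component of a vector field. -/
def c1 (v : PtT → Pt) : PtT → ℝ := fun p => (v p).1

/-- Second component of a vector field. -/
def c2 (v : PtT → Pt) : PtT → ℝ := fun p => (v p).2

/-- `𝒜₁₁ = ∂₂ζ₂`, for `𝒜 = (∇ζ)^{-T}` in the cofactor form valid when `det ∇ζ = 1`. -/
def A11 (ζ : PtT → Pt) : PtT → ℝ := sp2 (c2 ζ)

/-- `𝒜₁₂ = −∂₁ζ₂`. -/
def A12 (ζ : PtT → Pt) : PtT → ℝ := fun p => -(sp1 (c2 ζ) p)

/-- `𝒜₂₁ = −∂₂ζ₁`. -/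
def A21 (ζ : PtT → Pt) : PtT → ℝ := fun p => -(sp2 (c1 ζ) p)

/-- `𝒜₂₂ = ∂₁ζ₁`. -/
def A22 (ζ : PtT → Pt) : PtT → ℝ := sp1 (c1 ζ)

/-- `div_𝒜 X = Σ_{l,k} 𝒜_{lk} ∂_k X_l`. -/
def divA (ζ : PtT → Pt) (X : PtT → Pt) : PtT → ℝ :=
  fun p => A11 ζ p * sp1 (c1 X) p + A12 ζ p * sp2 (c1 X) p
    + A21 ζ p * sp1 (c2 X) p + A22 ζ p * sp2 (c2 X) p

/-!
Along each particle path `t ↦ (y, t)`, write `J = ∇ζ`. Since `det J = 1`, the cofactor matrix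
satisfies `𝒜ᵀ = J⁻¹`, and differentiating `det J = 1` in time gives `tr (adj J · ∂ₜJ) = 0`; with
these two facts `∂ₜ(𝒜ᵀ)` equals `-J⁻¹ (∂ₜJ) J⁻¹`. The induction equation reads
`∂ₜB = (∂ₜJ) J⁻¹ B`, because `∂ₜJ = ∇u` once time and space derivatives of the `C²` map `ζ`
are interchanged. Hence `∂ₜ(𝒜ᵀB) = 0` on the time interval, which is connected.
-/

section Slices

variable {E F : Type*} [NormedAddCommGroup E] [NormedSpace ℝ E] [NormedAddCommGroup F]
  [NormedSpace ℝ F]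

lemma fderiv_slice_apply {g : E × ℝ → F} {y : E} {t : ℝ} (hg : DifferentiableAt ℝ g (y, t))
    (v : E) : fderiv ℝ (fun x => g (x, t)) y v = fderiv ℝ g (y, t) (v, 0) := by
  have hslice : HasFDerivAt (fun x : E => (x, t)) ((ContinuousLinearMap.id ℝ E).prod 0) y :=
    (hasFDerivAt_id y).prodMk (hasFDerivAt_const t y)
  exact DFunLike.congr_fun (hg.hasFDerivAt.comp y hslice).fderiv v

lemma hasDerivAt_time_slice {g : E × ℝ → F} {y : E} {s : ℝ} (hg : DifferentiableAt ℝ g (y, s)) :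
    HasDerivAt (fun r => g (y, r)) (fderiv ℝ g (y, s) (0, 1)) s :=
  hg.hasFDerivAt.comp_hasDerivAt s ((hasDerivAt_const s y).prodMk (hasDerivAt_id s))

lemma ContDiff.hasFDerivAt_fderiv_apply {g : E → F} (hg : ContDiff ℝ 2 g) (x w : E) :
    HasFDerivAt (fun q => fderiv ℝ g q w)
      ((ContinuousLinearMap.apply ℝ F w).comp (fderiv ℝ (fderiv ℝ g) x)) x :=
  (ContinuousLinearMap.apply ℝ F w).hasFDerivAt.comp x
    ((hg.fderiv_right one_add_one_eq_two.le).differentiable one_ne_zero x).hasFDerivAt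

lemma hasDerivAt_fderiv_slice {g : E × ℝ → F} (hg : ContDiff ℝ 2 g) (y : E) (t : ℝ) (v : E) :
    HasDerivAt (fun s => fderiv ℝ (fun x => g (x, s)) y v)
      (fderiv ℝ (fun x => deriv (fun r => g (x, r)) t) y v) t := by
  have hgd : Differentiable ℝ g := hg.differentiable two_ne_zero
  have hspace : (fun s => fderiv ℝ (fun x => g (x, s)) y v) = fun s => fderiv ℝ g (y, s) (v, 0) :=
    funext fun s => fderiv_slice_apply (hgd _) v
  have htime : (fun x => deriv (fun r => g (x, r)) t) = fun x => fderiv ℝ g (x, t) (0, 1) :=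
    funext fun x => (hasDerivAt_time_slice (hgd _)).deriv
  have hsymm : fderiv ℝ (fderiv ℝ g) (y, t) (0, 1) (v, 0) =
      fderiv ℝ (fderiv ℝ g) (y, t) (v, 0) (0, 1) :=
    (hg.contDiffAt.isSymmSndFDerivAt (by simp)) _ _
  have hV := hg.hasFDerivAt_fderiv_apply (y, t) (v, 0)
  have hτ := hg.hasFDerivAt_fderiv_apply (y, t) (0, 1)
  rw [hspace, htime, fderiv_slice_apply (g := fun q => fderiv ℝ g q (0, 1)) hτ.differentiableAt,
    hτ.fderiv]
  convert hasDerivAt_time_slice hV.differentiableAt using 1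
  rw [hV.fderiv]
  exact hsymm.symm

lemma eq_of_forall_hasDerivAt_zero {f : ℝ → F} {I : Set ℝ} (hI : IsOpen I)
    (hI' : IsPreconnected I) (hf : ∀ s ∈ I, HasDerivAt f 0 s) {t t' : ℝ} (ht : t ∈ I)
    (ht' : t' ∈ I) : f t = f t' :=
  hI.is_const_of_deriv_eq_zero hI' (fun s hs => (hf s hs).differentiableAt.differentiableWithinAt)
    (fun s hs => (hf s hs).deriv) ht ht'

end Slices

lemma hasDerivAt_dt {g : PtT → ℝ} {y : Pt} {s : ℝ} (hg : DifferentiableAt ℝ g (y, s)) :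
    HasDerivAt (fun r => g (y, r)) (dt g (y, s)) s :=
  (hasDerivAt_time_slice hg).differentiableAt.hasDerivAt

lemma hasDerivAt_sp1 {g : PtT → ℝ} (hg : ContDiff ℝ 2 g) (y : Pt) (s : ℝ) :
    HasDerivAt (fun r => sp1 g (y, r)) (sp1 (dt g) (y, s)) s :=
  hasDerivAt_fderiv_slice hg y s (1, 0)

lemma hasDerivAt_sp2 {g : PtT → ℝ} (hg : ContDiff ℝ 2 g) (y : Pt) (s : ℝ) :
    HasDerivAt (fun r => sp2 g (y, r)) (sp2 (dt g) (y, s)) s :=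
  hasDerivAt_fderiv_slice hg y s (0, 1)

lemma jacobian_det_deriv_eq_zero {f g : PtT → ℝ} (hf : ContDiff ℝ 2 f) (hg : ContDiff ℝ 2 g)
    {I : Set ℝ} (hI : IsOpen I)
    (hdet : ∀ p : PtT, p.2 ∈ I → sp1 f p * sp2 g p - sp1 g p * sp2 f p = 1) (y : Pt) {s : ℝ}
    (hs : s ∈ I) :
    sp1 (dt f) (y, s) * sp2 g (y, s) + sp1 f (y, s) * sp2 (dt g) (y, s)
      - (sp1 (dt g) (y, s) * sp2 f (y, s) + sp1 g (y, s) * sp2 (dt f) (y, s)) = 0 := by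
  have hconst : (fun r => sp1 f (y, r) * sp2 g (y, r) - sp1 g (y, r) * sp2 f (y, r))
      =ᶠ[nhds s] fun _ => 1 :=
    Filter.eventually_of_mem (hI.mem_nhds hs) fun r hr => hdet (y, r) hr
  exact (((hasDerivAt_sp1 hf y s).mul (hasDerivAt_sp2 hg y s)).sub
    ((hasDerivAt_sp1 hg y s).mul (hasDerivAt_sp2 hf y s))).unique
      ((hasDerivAt_const s 1).congr_of_eventuallyEq hconst)

/-- `a, b, c, d` are the entries `∂₁ζ₁, ∂₂ζ₁, ∂₁ζ₂, ∂₂ζ₂` of `∇ζ` and primes denote time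
derivatives; the conclusion is `∂ₜ(𝒜ᵀB) = 0`. -/
lemma cofactor_flux_deriv_eq_zero {R : Type*} [CommRing R]
    {a b c d a' b' c' d' B₁ B₂ B₁' B₂' : R} (hdet : a * d - c * b = 1)
    (hdet' : a' * d + a * d' - (c' * b + c * b') = 0)
    (h₁ : B₁' = B₁ * (d * a' + -c * b') + B₂ * (-b * a' + a * b'))
    (h₂ : B₂' = B₁ * (d * c' + -c * d') + B₂ * (-b * c' + a * d')) :
    d' * B₁ + d * B₁' + (-b' * B₂ + -b * B₂') = 0 ∧
      -c' * B₁ + -c * B₁' + (a' * B₂ + a * B₂') = 0 := by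
  constructor
  · linear_combination d * h₁ - b * h₂ + (B₂ * b' - B₁ * d') * hdet + (B₁ * d - B₂ * b) * hdet'
  · linear_combination a * h₂ - c * h₁ + (B₁ * c' - B₂ * a') * hdet + (B₂ * a - B₁ * c) * hdet'

/-- magnetic flux conservation in Lagrangian coordinates:
let `ζ` be `C²` with `det ∇ζ = 1` on `ℝ² × I`, `0 ∈ I`, `u := ∂_t ζ`, and
`𝒜 := (∇ζ)^{-T}` (cofactor form).  If `B` is `C¹` and satisfies the induction
equation `∂_t B_i = Σ_{j,k} B_j 𝒜_{jk} ∂_k u_i` on `ℝ² × I`, then `𝒜ᵀB` is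
independent of time: `Σ_j 𝒜_{jl}(y,t) B_j(y,t) = Σ_j 𝒜_{jl}(y,0) B_j(y,0)`
for `l = 1, 2`, every `y` and every `t ∈ I`. -/
theorem statement9 (a b : ℝ) (ha : a < 0) (hb : 0 < b) (ζ B : PtT → Pt)
    (hζ : ContDiff ℝ 2 ζ) (hB : ContDiff ℝ 1 B)
    (hdet : ∀ p : PtT, p.2 ∈ Set.Ioo a b →
      sp1 (c1 ζ) p * sp2 (c2 ζ) p - sp1 (c2 ζ) p * sp2 (c1 ζ) p = 1)
    (hind1 : ∀ p : PtT, p.2 ∈ Set.Ioo a b →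
      dt (c1 B) p =
        c1 B p * (A11 ζ p * sp1 (dt (c1 ζ)) p + A12 ζ p * sp2 (dt (c1 ζ)) p)
          + c2 B p * (A21 ζ p * sp1 (dt (c1 ζ)) p + A22 ζ p * sp2 (dt (c1 ζ)) p))
    (hind2 : ∀ p : PtT, p.2 ∈ Set.Ioo a b →
      dt (c2 B) p =
        c1 B p * (A11 ζ p * sp1 (dt (c2 ζ)) p + A12 ζ p * sp2 (dt (c2 ζ)) p)
          + c2 B p * (A21 ζ p * sp1 (dt (c2 ζ)) p + A22 ζ p * sp2 (dt (c2 ζ)) p)) :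
    ∀ y : Pt, ∀ t ∈ Set.Ioo a b,
      (A11 ζ (y, t) * c1 B (y, t) + A21 ζ (y, t) * c2 B (y, t)
          = A11 ζ (y, 0) * c1 B (y, 0) + A21 ζ (y, 0) * c2 B (y, 0)) ∧
      (A12 ζ (y, t) * c1 B (y, t) + A22 ζ (y, t) * c2 B (y, t)
          = A12 ζ (y, 0) * c1 B (y, 0) + A22 ζ (y, 0) * c2 B (y, 0)) := by
  intro y t ht
  have hζ₁ : ContDiff ℝ 2 (c1 ζ) := contDiff_fst.comp hζ
  have hζ₂ : ContDiff ℝ 2 (c2 ζ) := contDiff_snd.comp hζ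
  have hB₁ : Differentiable ℝ (c1 B) := (contDiff_fst.comp hB).differentiable one_ne_zero
  have hB₂ : Differentiable ℝ (c2 B) := (contDiff_snd.comp hB).differentiable one_ne_zero
  have hflux : ∀ s ∈ Set.Ioo a b,
      HasDerivAt (fun r => A11 ζ (y, r) * c1 B (y, r) + A21 ζ (y, r) * c2 B (y, r)) 0 s ∧
      HasDerivAt (fun r => A12 ζ (y, r) * c1 B (y, r) + A22 ζ (y, r) * c2 B (y, r)) 0 s := by
    intro s hs
    have hdB₁ := hasDerivAt_dt (hB₁ (y, s))
    have hdB₂ := hasDerivAt_dt (hB₂ (y, s))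
    obtain ⟨h₁, h₂⟩ := cofactor_flux_deriv_eq_zero (hdet _ hs)
      (jacobian_det_deriv_eq_zero hζ₁ hζ₂ isOpen_Ioo hdet y hs) (hind1 _ hs) (hind2 _ hs)
    exact ⟨(((hasDerivAt_sp2 hζ₂ y s).mul hdB₁).add
        ((hasDerivAt_sp2 hζ₁ y s).neg.mul hdB₂)).congr_deriv h₁,
      (((hasDerivAt_sp1 hζ₂ y s).neg.mul hdB₁).add
        ((hasDerivAt_sp1 hζ₁ y s).mul hdB₂)).congr_deriv h₂⟩
  have h₀ : (0 : ℝ) ∈ Set.Ioo a b := ⟨ha, hb⟩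
  exact ⟨eq_of_forall_hasDerivAt_zero isOpen_Ioo isPreconnected_Ioo (fun s hs => (hflux s hs).1)
      ht h₀,
    eq_of_forall_hasDerivAt_zero isOpen_Ioo isPreconnected_Ioo (fun s hs => (hflux s hs).2) ht h₀⟩
end
end
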